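/- All roots of the crossing polynomial M(Γ(t)) of a weighted signed graph Γ are real and nonnegative. -/

import Mathlib

open scoped Classical
open Polynomial

namespace SGPaper

/-- A weighted signed graph on `n` vertices, given by its symmetric hollow
matrix of edge weights (a nonzero entry `w i j` is the weight of the edge `ij`;
positive edges have positive weight, negative edges negative weight). -/
structure WSG (n : ℕ) where
  w : Matrix (Fin n) (Fin n) ℝ
  symm : w.IsSymm
  loopless : ∀ i, w i i = 0

variable {n : ℕ}

/-- The underlying simple graph. -/
def WSG.graph (Γ : WSG n) : SimpleGraph (Fin n) :=
  SimpleGraph.fromRel (fun i j => Γ.w i j ≠ 0)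

/-- The spanning subgraph of positive edges. -/
def WSG.posGraph (Γ : WSG n) : SimpleGraph (Fin n) :=
  SimpleGraph.fromRel (fun i j => 0 < Γ.w i j)

/-- The spanning subgraph of negative edges. -/
def WSG.negGraph (Γ : WSG n) : SimpleGraph (Fin n) :=
  SimpleGraph.fromRel (fun i j => Γ.w i j < 0)

/-- Number of connected components of a graph. -/
noncomputable def comps {V : Type*} (G : SimpleGraph V) : ℕ :=
  Nat.card G.ConnectedComponent

/-- Weighted Laplacian `L = A - D`. -/
def WSG.lap (Γ : WSG n) : Matrix (Fin n) (Fin n) ℝ :=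
  Γ.w - Matrix.diagonal (fun i => ∑ j, Γ.w i j)

theorem WSG.lap_isHermitian (Γ : WSG n) : Γ.lap.IsHermitian := by
  have h : Γ.lap.IsSymm := Γ.symm.sub (Matrix.isSymm_diagonal _)
  show Matrix.conjTranspose Γ.lap = Γ.lap
  refine Matrix.ext fun i j => ?_
  have h' := congrFun (congrFun h i) j
  rw [Matrix.transpose_apply] at h'
  rw [Matrix.conjTranspose_apply, star_trivial]
  exact h'

/-- Number of positive eigenvalues of the Laplacian. -/
noncomputable def WSG.nPos (Γ : WSG n) : ℕ :=
  (Finset.univ.filter fun i => 0 < Γ.lap_isHermitian.eigenvalues i).card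

/-- Number of negative eigenvalues of the Laplacian. -/
noncomputable def WSG.nNeg (Γ : WSG n) : ℕ :=
  (Finset.univ.filter fun i => Γ.lap_isHermitian.eigenvalues i < 0).card

/-- Multiplicity of `0` as an eigenvalue of the Laplacian. -/
noncomputable def WSG.nZero (Γ : WSG n) : ℕ :=
  (Finset.univ.filter fun i => Γ.lap_isHermitian.eigenvalues i = 0).card

/-- The Laplacian inertia `(n₊, n₋, n₀)`. -/
noncomputable def WSG.inertia (Γ : WSG n) : ℕ × ℕ × ℕ := (Γ.nPos, Γ.nNeg, Γ.nZero)

/-- The Laplacian of `Γ(t) = Γ₊ + tΓ₋` (the weights of the negative edges are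
multiplied by `t`), as a matrix of polynomials in `t = X`. -/
noncomputable def WSG.lapPoly (Γ : WSG n) : Matrix (Fin n) (Fin n) (Polynomial ℝ) :=
  let wt : Matrix (Fin n) (Fin n) (Polynomial ℝ) :=
    Matrix.of fun i j => C (max (Γ.w i j) 0) + X * C (min (Γ.w i j) 0)
  wt - Matrix.diagonal (fun i => ∑ j, wt i j)

/-- The crossing polynomial `M(Γ(t))`: up to the multiplicative factor
`(-1)^(c-1)/n` it is the coefficient of the degree-`c` term of the
characteristic polynomial of `L(Γ(t))`; equivalently it equals
`((-1)^(n-1)/n) · ∏_{i=c+1}^n λᵢ(t)`. -/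
noncomputable def WSG.cross (Γ : WSG n) : Polynomial ℝ :=
  C ((-1 : ℝ) ^ (comps Γ.graph - 1) / n) * (Γ.lapPoly.charpoly).coeff (comps Γ.graph)

/-- The weight of an edge, as a function on unordered pairs. -/
noncomputable def WSG.edgeWeight (Γ : WSG n) : Sym2 (Fin n) → ℝ :=
  Sym2.lift ⟨fun i j => Γ.w i j, fun i j => Γ.symm.apply j i⟩

/-- A maximal spanning forest of `Γ`: a set of `n - c` edges of `Γ` forming an
acyclic graph. -/
def WSG.IsMaxForest (Γ : WSG n) (F : Finset (Sym2 (Fin n))) : Prop :=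
  (↑F : Set (Sym2 (Fin n))) ⊆ Γ.graph.edgeSet ∧
    (SimpleGraph.fromEdgeSet (↑F : Set (Sym2 (Fin n)))).IsAcyclic ∧
    F.card = n - comps Γ.graph

/-- `aₖ = Σ_{F ∈ SFₖ(Γ)} |π(F)|`: the sum of the absolute values of the
products of the edge weights over all maximal spanning forests of `Γ` with
exactly `k` negative edges. -/
noncomputable def WSG.ak (Γ : WSG n) (k : ℕ) : ℝ :=
  ∑ F ∈ Finset.univ.filter (fun F : Finset (Sym2 (Fin n)) =>
      Γ.IsMaxForest F ∧ (F.filter fun e => Γ.edgeWeight e < 0).card = k),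
    |∏ e ∈ F, Γ.edgeWeight e|

end SGPaper

/-
For `z ∉ [0, ∞)` the Laplacian `L(z) = L₊ + z L₋` of `Γ(z)` satisfies
`2 x* L(z) x = -(p - z q)` with `p, q ≥ 0`, so `x* L(z) x = 0` forces `p = q = 0`, i.e. `x` is
constant on every edge. Hence `ker L(z)` is the `c`-dimensional space of functions constant on
components, and the same holds for `L(z)ᴴ = L(z̄)`. Then `ker L(z)` meets `range L(z)` trivially,
so `0` has algebraic multiplicity exactly `c`, and the coefficient of `x^c` in the characteristic
polynomial of `L(z)`, which is `M(Γ(z))` up to a nonzero factor, does not vanish.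
-/

open Polynomial Module Matrix
open scoped ComplexOrder ComplexConjugate

theorem Module.End.maxGenEigenspace_zero_eq_ker {K V : Type*} [Field K] [AddCommGroup V]
    [Module K V] [FiniteDimensional K V] {f : End K V} (h : ∀ x, f (f x) = 0 → f x = 0) :
    f.maxGenEigenspace 0 = LinearMap.ker f := by
  have hsq : LinearMap.ker (f ^ 1) = LinearMap.ker (f ^ (1 + 1)) :=
    le_antisymm (LinearMap.ker_le_ker_comp _ _) fun x hx => h x hx
  refine le_antisymm (fun x hx => ?_) fun x hx => ?_
  · obtain ⟨k, hk⟩ := (Module.End.mem_maxGenEigenspace f 0 x).1 hx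
    simp only [zero_smul, sub_zero] at hk
    have : x ∈ LinearMap.ker (f ^ (1 + k)) := by
      rw [add_comm, pow_succ', LinearMap.mem_ker, Module.End.mul_apply, hk, map_zero]
    simpa [← Module.End.ker_pow_constant hsq k] using this
  · exact (Module.End.mem_maxGenEigenspace f 0 x).2 ⟨1, by simpa using hx⟩

theorem Matrix.charpoly_coeff_finrank_ker_ne_zero {ι K : Type*} [Fintype ι] [DecidableEq ι]
    [Field K] {M : Matrix ι ι K} (h : ∀ x, M *ᵥ (M *ᵥ x) = 0 → M *ᵥ x = 0) :
    M.charpoly.coeff (finrank K (LinearMap.ker M.toLin')) ≠ 0 := by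
  have hker : Module.End.maxGenEigenspace M.toLin' 0 = LinearMap.ker M.toLin' :=
    Module.End.maxGenEigenspace_zero_eq_ker (by simpa using h)
  rw [← hker, LinearMap.finrank_maxGenEigenspace_zero_eq, Matrix.charpoly_toLin']
  exact mt trailingCoeff_eq_zero.1 M.charpoly_monic.ne_zero

theorem Matrix.mulVec_eq_zero_of_mulVec_mulVec_eq_zero {ι 𝕜 : Type*} [Fintype ι] [RCLike 𝕜]
    {M : Matrix ι ι 𝕜} (hker : LinearMap.ker M.toLin' ≤ LinearMap.ker Mᴴ.toLin') {x : ι → 𝕜}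
    (h : M *ᵥ (M *ᵥ x) = 0) : M *ᵥ x = 0 := by
  have hstar : Mᴴ *ᵥ (M *ᵥ x) = 0 := by
    simpa using hker (LinearMap.mem_ker.2 (by rwa [toLin'_apply]) : M *ᵥ x ∈ _)
  rw [← dotProduct_star_self_eq_zero]
  calc star (M *ᵥ x) ⬝ᵥ (M *ᵥ x) = star (Mᴴ *ᵥ (M *ᵥ x)) ⬝ᵥ x := by
        rw [dotProduct_mulVec, star_mulVec Mᴴ, conjTranspose_conjTranspose]
    _ = 0 := by rw [hstar, star_zero, zero_dotProduct]

theorem Complex.eq_zero_of_ofReal_eq_mul_ofReal {p q : ℝ} {z : ℂ} (hp : 0 ≤ p) (hq : 0 ≤ q)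
    (hz : ∀ t : ℝ, 0 ≤ t → (t : ℂ) ≠ z) (h : (p : ℂ) = z * q) : p = 0 ∧ q = 0 := by
  rcases hq.eq_or_lt with rfl | hq
  · exact ⟨by simpa using h, rfl⟩
  · refine absurd ?_ (hz (p / q) (div_nonneg hp hq.le))
    rw [Complex.ofReal_div, h, mul_div_cancel_right₀ _ (by exact_mod_cast hq.ne')]

def SimpleGraph.constOnComponents {V : Type*} (G : SimpleGraph V) (K : Type*) [Field K] :
    Submodule K (V → K) where
  carrier := {x | ∀ ⦃i j⦄, G.Adj i j → x i = x j}
  add_mem' hx hy i j h := by simp only [Pi.add_apply, hx h, hy h]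
  zero_mem' _ _ _ := rfl
  smul_mem' c x hx i j h := by simp only [Pi.smul_apply, hx h]

@[simp]
theorem SimpleGraph.mem_constOnComponents {V : Type*} {G : SimpleGraph V} {K : Type*} [Field K]
    {x : V → K} : x ∈ G.constOnComponents K ↔ ∀ ⦃i j⦄, G.Adj i j → x i = x j :=
  Iff.rfl

theorem SimpleGraph.range_funLeft_connectedComponentMk {V : Type*} (G : SimpleGraph V)
    (K : Type*) [Field K] :
    LinearMap.range (LinearMap.funLeft K K G.connectedComponentMk) = G.constOnComponents K := by
  ext x
  constructor
  · rintro ⟨f, rfl⟩ i j hij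
    exact congrArg f (SimpleGraph.ConnectedComponent.connectedComponentMk_eq_of_adj hij)
  · intro hx
    have hwalk : ∀ {u v} (p : G.Walk u v), x u = x v := by
      intro u v p
      induction p with
      | nil => rfl
      | cons h _ ih => exact (hx h).trans ih
    exact ⟨SimpleGraph.ConnectedComponent.lift x fun u v p _ => hwalk p, rfl⟩

theorem SimpleGraph.finrank_constOnComponents {V : Type*} [Finite V] (G : SimpleGraph V)
    (K : Type*) [Field K] :
    finrank K (G.constOnComponents K) = Nat.card G.ConnectedComponent := by
  have := Fintype.ofFinite G.ConnectedComponent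
  rw [← G.range_funLeft_connectedComponentMk, LinearMap.finrank_range_of_inj
    (LinearMap.funLeft_injective_of_surjective _ _ G.connectedComponentMk fun c => c.exists_rep),
    finrank_fintype_fun_eq_card, Nat.card_eq_fintype_card]

namespace Matrix

variable {ι R : Type*} [Fintype ι] [DecidableEq ι]

def laplacian [CommRing R] (W : Matrix ι ι R) : Matrix ι ι R :=
  W - diagonal fun i => ∑ j, W i j

theorem laplacian_mulVec_apply [CommRing R] (W : Matrix ι ι R) (x : ι → R) (i : ι) :
    (laplacian W *ᵥ x) i = ∑ j, W i j * (x j - x i) := by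
  simp only [laplacian, sub_mulVec, Pi.sub_apply, mulVec_diagonal, Finset.sum_mul, mul_sub,
    Finset.sum_sub_distrib]
  rfl

theorem laplacian_mulVec_eq_zero [CommRing R] {W : Matrix ι ι R} {x : ι → R}
    (h : ∀ i j, W i j ≠ 0 → x i = x j) : laplacian W *ᵥ x = 0 := by
  funext i
  rw [laplacian_mulVec_apply, Pi.zero_apply]
  refine Finset.sum_eq_zero fun j _ => ?_
  by_cases hij : W i j = 0
  · rw [hij, zero_mul]
  · rw [h i j hij, sub_self, mul_zero]

theorem laplacian_map {S : Type*} [CommRing R] [CommRing S] (f : R →+* S) (W : Matrix ι ι R) :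
    (laplacian W).map f = laplacian (W.map f) := by
  ext i j
  by_cases hij : i = j <;> simp [laplacian, hij]

theorem conjTranspose_laplacian [CommRing R] [StarRing R] {W : Matrix ι ι R} (hW : W.IsSymm) :
    (laplacian W)ᴴ = laplacian Wᴴ := by
  ext i j
  by_cases hij : i = j
  · simp [laplacian, hij, hW.apply]
  · simp [laplacian, hij, Ne.symm hij, hW.apply]

theorem two_mul_star_dotProduct_laplacian_mulVec {W : Matrix ι ι ℂ} (hW : W.IsSymm)
    (x : ι → ℂ) :
    2 * (star x ⬝ᵥ (laplacian W *ᵥ x)) = -∑ i, ∑ j, W i j * Complex.normSq (x i - x j) := by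
  have hquad : star x ⬝ᵥ (laplacian W *ᵥ x) = ∑ i, ∑ j, W i j * (conj (x i) * (x j - x i)) := by
    simp only [dotProduct, laplacian_mulVec_apply, Pi.star_apply, Complex.star_def,
      Finset.mul_sum]
    exact Finset.sum_congr rfl fun i _ => Finset.sum_congr rfl fun j _ => by ring
  have hswap : star x ⬝ᵥ (laplacian W *ᵥ x) = ∑ i, ∑ j, W i j * (conj (x j) * (x i - x j)) := by
    rw [hquad, Finset.sum_comm]
    simp only [hW.apply]
  rw [two_mul]
  nth_rw 1 [hquad]
  rw [hswap]
  simp only [← Finset.sum_add_distrib, ← Finset.sum_neg_distrib, ← Complex.mul_conj, map_sub]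
  exact Finset.sum_congr rfl fun i _ => Finset.sum_congr rfl fun j _ => by ring

end Matrix

namespace SGPaper

variable {n : ℕ}

noncomputable def WSG.weightsAt (Γ : WSG n) (z : ℂ) : Matrix (Fin n) (Fin n) ℂ :=
  Matrix.of fun i j => (max (Γ.w i j) 0 : ℝ) + z * (min (Γ.w i j) 0 : ℝ)

theorem WSG.weightsAt_isSymm (Γ : WSG n) (z : ℂ) : (Γ.weightsAt z).IsSymm := by
  ext i j
  simp [WSG.weightsAt, Γ.symm.apply]

theorem WSG.conjTranspose_weightsAt (Γ : WSG n) (z : ℂ) :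
    (Γ.weightsAt z)ᴴ = Γ.weightsAt (conj z) := by
  ext i j
  simp [WSG.weightsAt, Γ.symm.apply, Complex.conj_ofReal]

theorem WSG.lapPoly_map_aeval (Γ : WSG n) (z : ℂ) :
    Γ.lapPoly.map (Polynomial.aeval z).toRingHom = laplacian (Γ.weightsAt z) := by
  rw [WSG.lapPoly, ← laplacian, laplacian_map]
  congr 1
  ext i j
  simp only [Matrix.map_apply, Matrix.of_apply, WSG.weightsAt, AlgHom.toRingHom_eq_coe,
    RingHom.coe_coe, map_add, map_mul, Polynomial.aeval_C, Polynomial.aeval_X,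
    Complex.coe_algebraMap]

theorem WSG.isRoot_cross_map_iff (Γ : WSG n) (hn : 0 < n) (z : ℂ) :
    (Γ.cross.map (algebraMap ℝ ℂ)).IsRoot z ↔
      (laplacian (Γ.weightsAt z)).charpoly.coeff (comps Γ.graph) = 0 := by
  rw [Polynomial.IsRoot, Polynomial.eval_map, ← Polynomial.aeval_def, WSG.cross, map_mul,
    Polynomial.aeval_C, ← Γ.lapPoly_map_aeval, charpoly_map, Polynomial.coeff_map]
  simp [hn.ne']

theorem WSG.sum_weightsAt_mul_normSq (Γ : WSG n) (z : ℂ) (x : Fin n → ℂ) :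
    ∑ i, ∑ j, Γ.weightsAt z i j * Complex.normSq (x i - x j) =
      ((∑ i, ∑ j, max (Γ.w i j) 0 * Complex.normSq (x i - x j) : ℝ) : ℂ) -
        z * ((∑ i, ∑ j, -min (Γ.w i j) 0 * Complex.normSq (x i - x j) : ℝ) : ℂ) := by
  simp only [WSG.weightsAt, Matrix.of_apply, Complex.ofReal_sum, Complex.ofReal_mul,
    Complex.ofReal_neg, Finset.mul_sum, ← Finset.sum_sub_distrib]
  exact Finset.sum_congr rfl fun i _ => Finset.sum_congr rfl fun j _ => by ring

theorem WSG.eq_of_star_dotProduct_laplacian_weightsAt_mulVec_eq_zero (Γ : WSG n) {z : ℂ}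
    (hz : ∀ t : ℝ, 0 ≤ t → (t : ℂ) ≠ z) {x : Fin n → ℂ}
    (hx : star x ⬝ᵥ (laplacian (Γ.weightsAt z) *ᵥ x) = 0) {i j : Fin n} (hij : Γ.w i j ≠ 0) :
    x i = x j := by
  set p := ∑ i, ∑ j, max (Γ.w i j) 0 * Complex.normSq (x i - x j)
  set q := ∑ i, ∑ j, -min (Γ.w i j) 0 * Complex.normSq (x i - x j)
  have hpq : (p : ℂ) = z * q := by
    have h := two_mul_star_dotProduct_laplacian_mulVec (Γ.weightsAt_isSymm z) x
    rwa [hx, mul_zero, Γ.sum_weightsAt_mul_normSq, eq_comm, neg_eq_zero, sub_eq_zero] at h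
  obtain ⟨hp, hq⟩ := Complex.eq_zero_of_ofReal_eq_mul_ofReal
    (Finset.sum_nonneg fun i _ => Finset.sum_nonneg fun j _ =>
      mul_nonneg (le_max_right _ _) (Complex.normSq_nonneg _))
    (Finset.sum_nonneg fun i _ => Finset.sum_nonneg fun j _ =>
      mul_nonneg (neg_nonneg.2 (min_le_right _ _)) (Complex.normSq_nonneg _)) hz hpq
  have habs : ∑ i, ∑ j, |Γ.w i j| * Complex.normSq (x i - x j) = 0 := by
    have hsplit (a : ℝ) : |a| = max a 0 + -min a 0 := by
      rcases le_total a 0 with h | h <;> simp [h, abs_of_nonpos, abs_of_nonneg]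
    simp only [hsplit, add_mul, Finset.sum_add_distrib]
    rw [hp, hq, add_zero]
  have hnonneg (i j : Fin n) : 0 ≤ |Γ.w i j| * Complex.normSq (x i - x j) :=
    mul_nonneg (abs_nonneg _) (Complex.normSq_nonneg _)
  have hterm := (Fintype.sum_eq_zero_iff_of_nonneg fun i =>
    Finset.sum_nonneg fun j _ => hnonneg i j).1 habs
  have hterm' := (Fintype.sum_eq_zero_iff_of_nonneg (hnonneg i)).1 (congrFun hterm i)
  have := congrFun hterm' j
  simp only [Pi.zero_apply, mul_eq_zero, abs_eq_zero, Complex.normSq_eq_zero, sub_eq_zero] at this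
  exact this.resolve_left hij

theorem WSG.ker_laplacian_weightsAt (Γ : WSG n) {z : ℂ} (hz : ∀ t : ℝ, 0 ≤ t → (t : ℂ) ≠ z) :
    LinearMap.ker (laplacian (Γ.weightsAt z)).toLin' = Γ.graph.constOnComponents ℂ := by
  ext x
  rw [LinearMap.mem_ker, toLin'_apply, SimpleGraph.mem_constOnComponents]
  constructor
  · intro hLx i j hadj
    have hquad : star x ⬝ᵥ (laplacian (Γ.weightsAt z) *ᵥ x) = 0 := by
      rw [hLx, dotProduct_zero]
    rw [WSG.graph, SimpleGraph.fromRel_adj] at hadj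
    obtain ⟨-, hij | hji⟩ := hadj
    · exact Γ.eq_of_star_dotProduct_laplacian_weightsAt_mulVec_eq_zero hz hquad hij
    · exact (Γ.eq_of_star_dotProduct_laplacian_weightsAt_mulVec_eq_zero hz hquad hji).symm
  · intro hx
    refine laplacian_mulVec_eq_zero fun i j hij => hx ?_
    have hw : Γ.w i j ≠ 0 := fun hw => hij (by simp [WSG.weightsAt, hw])
    rw [WSG.graph, SimpleGraph.fromRel_adj]
    exact ⟨fun h => hw (h ▸ Γ.loopless i), Or.inl hw⟩

/-- All roots of the crossing polynomial `M(Γ(t))` are real and nonnegative. -/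
theorem cross_roots_real_nonneg {n : ℕ} (hn : 0 < n) (Γ : WSG n) (z : ℂ)
    (hz : (Γ.cross.map (algebraMap ℝ ℂ)).IsRoot z) :
    ∃ t : ℝ, 0 ≤ t ∧ (t : ℂ) = z := by
  by_contra! hz_ne
  have hz_conj : ∀ t : ℝ, 0 ≤ t → (t : ℂ) ≠ conj z := fun t ht h =>
    hz_ne t ht (by rw [← Complex.conj_ofReal, h, Complex.conj_conj])
  set L := laplacian (Γ.weightsAt z)
  have hker : LinearMap.ker L.toLin' = Γ.graph.constOnComponents ℂ :=
    Γ.ker_laplacian_weightsAt hz_ne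
  have hker_conj : LinearMap.ker Lᴴ.toLin' = Γ.graph.constOnComponents ℂ := by
    rw [conjTranspose_laplacian (Γ.weightsAt_isSymm z), Γ.conjTranspose_weightsAt]
    exact Γ.ker_laplacian_weightsAt hz_conj
  have hLsq : ∀ x, L *ᵥ (L *ᵥ x) = 0 → L *ᵥ x = 0 := fun x =>
    mulVec_eq_zero_of_mulVec_mulVec_eq_zero (hker.trans hker_conj.symm).le
  have hcoeff := charpoly_coeff_finrank_ker_ne_zero hLsq
  rw [hker, SimpleGraph.finrank_constOnComponents] at hcoeff
  exact hcoeff ((Γ.isRoot_cross_map_iff hn z).1 hz)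

end SGPaper
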